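/- arXiv:1512.03174 — 7 statements merged into one kernel-verified Lean document; each statement's English description precedes it below -/
import Mathlib

section
/- (STi) Let X be a topological space and F: X → X a strongly transitive map. If S ⊆ X is nonempty and backward invariant, i.e. F⁻¹(S) ⊆ S, then S is dense in X. -/
/-- F is strongly transitive: every nonempty open set covers the whole space
in finitely many forward iterates. -/
def StronglyTransitive {X : Type*} [TopologicalSpace X] (F : X → X) : Prop :=
  ∀ D : Set X, IsOpen D → D.Nonempty →
    ∃ N : ℕ, (⋃ n ∈ Finset.Icc 1 N, F^[n] '' D) = Set.univ

theorem Set.iterate_preimage_subset {α : Type*} {f : α → α} {s : Set α} (h : f ⁻¹' s ⊆ s)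
    (n : ℕ) : f^[n] ⁻¹' s ⊆ s := by
  have hcompl : Set.MapsTo f sᶜ sᶜ := fun _ hx hfx => hx (h hfx)
  exact fun _ hx => by_contra fun hxs => hcompl.iterate n hxs hx

theorem StronglyTransitive.exists_iterate_eq {X : Type*} [TopologicalSpace X] {F : X → X}
    (hF : StronglyTransitive F) {D : Set X} (hD : IsOpen D) (hne : D.Nonempty) (x : X) :
    ∃ n, ∃ y ∈ D, F^[n] y = x := by
  obtain ⟨N, hN⟩ := hF D hD hne
  have hx : x ∈ ⋃ n ∈ Finset.Icc 1 N, F^[n] '' D := hN ▸ Set.mem_univ x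
  simp only [Set.mem_iUnion, Set.mem_image] at hx
  obtain ⟨n, -, hn⟩ := hx
  exact ⟨n, hn⟩

/-- **(STi)** A nonempty backward-invariant set of a strongly transitive map
is dense. -/
theorem dense_of_backward_invariant {X : Type*} [TopologicalSpace X]
    (F : X → X) (hF : StronglyTransitive F)
    (S : Set X) (hS : S.Nonempty) (hinv : F ⁻¹' S ⊆ S) :
    Dense S := by
  rw [dense_iff_inter_open]
  intro D hD hne
  obtain ⟨x, hx⟩ := hS
  obtain ⟨n, y, hyD, rfl⟩ := hF.exists_iterate_eq hD hne x
  exact ⟨y, hyD, Set.iterate_preimage_subset hinv n hx⟩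
end

section
/- (Generalization of STii) Let X be a nonempty compact metric space, F: X → X a continuous, strongly transitive map, and (U_j)_{j≥0} any sequence of nonempty open subsets of X. Then there exist a point x₀ ∈ X and a strictly increasing sequence of natural numbers (m_j)_{j≥0} such that F^{m_j}(x₀) lies in the closure of U_j for every j. -/
open Set

namespace StronglyTransitive

variable {X : Type*} [TopologicalSpace X] {F : X → X}

theorem exists_iterate_inter_preimage_nonempty (hF : StronglyTransitive F) {D U : Set X}
    (hD : IsOpen D) (hDne : D.Nonempty) (hUne : U.Nonempty) :
    ∃ n, 1 ≤ n ∧ (D ∩ F^[n] ⁻¹' U).Nonempty := by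
  obtain ⟨N, hN⟩ := hF D hD hDne
  obtain ⟨y, hy⟩ := hUne
  have hy_cover : y ∈ ⋃ n ∈ Finset.Icc 1 N, F^[n] '' D := hN ▸ mem_univ y
  simp only [mem_iUnion, Finset.mem_Icc] at hy_cover
  obtain ⟨n, ⟨hn, -⟩, x, hx, rfl⟩ := hy_cover
  exact ⟨n, hn, x, hx, hy⟩

theorem surjective (hF : StronglyTransitive F) : Function.Surjective F := by
  intro y
  obtain ⟨n, hn, x, -, hx⟩ :=
    hF.exists_iterate_inter_preimage_nonempty isOpen_univ ⟨y, trivial⟩ (singleton_nonempty y)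
  obtain ⟨k, rfl⟩ := Nat.exists_eq_add_of_le' hn
  exact ⟨F^[k] x, by rwa [← Function.iterate_succ_apply' F k x]⟩

theorem exists_gt_iterate_inter_preimage_nonempty (hF : StronglyTransitive F) {D U : Set X}
    (hD : IsOpen D) (hDne : D.Nonempty) (hUne : U.Nonempty) (M : ℕ) :
    ∃ n, M < n ∧ (D ∩ F^[n] ⁻¹' U).Nonempty := by
  have hpre : (F^[M] ⁻¹' U).Nonempty := hUne.preimage (hF.surjective.iterate M)
  obtain ⟨n, hn, hne⟩ := hF.exists_iterate_inter_preimage_nonempty hD hDne hpre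
  refine ⟨M + n, by omega, ?_⟩
  rwa [Function.iterate_add, preimage_comp]

theorem exists_nested_subset_iterate_preimage (hFc : Continuous F) (hF : StronglyTransitive F)
    {U : ℕ → Set X} (hUopen : ∀ j, IsOpen (U j)) (hUne : ∀ j, (U j).Nonempty) :
    ∃ (V : ℕ → Set X) (m : ℕ → ℕ), StrictMono m ∧ (∀ j, V (j + 1) ⊆ V j) ∧
      (∀ j, (V j).Nonempty) ∧ ∀ j, V j ⊆ F^[m j] ⁻¹' U j := by
  let Good : ℕ → ℕ × Set X → Prop := fun j p =>
    IsOpen p.2 ∧ p.2.Nonempty ∧ p.2 ⊆ F^[p.1] ⁻¹' U j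
  have hstep : ∀ j p, Good j p → ∃ q, Good (j + 1) q ∧ p.1 < q.1 ∧ q.2 ⊆ p.2 := by
    rintro j ⟨m, V⟩ ⟨hVopen, hVne, -⟩
    obtain ⟨n, hmn, hne⟩ :=
      hF.exists_gt_iterate_inter_preimage_nonempty hVopen hVne (hUne (j + 1)) m
    exact ⟨(n, V ∩ F^[n] ⁻¹' U (j + 1)),
      ⟨hVopen.inter ((hUopen _).preimage (hFc.iterate n)), hne, inter_subset_right⟩,
      hmn, inter_subset_left⟩
  choose! next hnext using hstep
  let seq : ℕ → ℕ × Set X := fun j => Nat.rec (0, U 0) next j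
  have hgood : ∀ j, Good j (seq j) := by
    intro j
    induction j with
    | zero => exact ⟨hUopen 0, hUne 0, subset_rfl⟩
    | succ j ih => exact (hnext j _ ih).1
  exact ⟨fun j => (seq j).2, fun j => (seq j).1,
    strictMono_nat_of_lt_succ fun j => (hnext j _ (hgood j)).2.1,
    fun j => (hnext j _ (hgood j)).2.2, fun j => (hgood j).2.1, fun j => (hgood j).2.2⟩

end StronglyTransitive

theorem exists_orbit_visiting_sequence_general {X : Type*} [MetricSpace X]
    [CompactSpace X] (F : X → X) (hFc : Continuous F)
    (hF : StronglyTransitive F)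
    (U : ℕ → Set X) (hUopen : ∀ j, IsOpen (U j)) (hUne : ∀ j, (U j).Nonempty) :
    ∃ (x₀ : X) (msec : ℕ → ℕ), StrictMono msec ∧
      ∀ j : ℕ, F^[msec j] x₀ ∈ closure (U j) := by
  obtain ⟨V, m, hm, hV_succ, hVne, hVU⟩ :=
    hF.exists_nested_subset_iterate_preimage hFc hUopen hUne
  obtain ⟨x₀, hx₀⟩ := IsCompact.nonempty_iInter_of_sequence_nonempty_isCompact_isClosed
    (fun j => closure (V j)) (fun j => closure_mono (hV_succ j)) (fun j => (hVne j).closure)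
    isClosed_closure.isCompact (fun _ => isClosed_closure)
  refine ⟨x₀, m, hm, fun j => ?_⟩
  exact (hFc.iterate (m j)).closure_preimage_subset (U j)
    (closure_mono (hVU j) (mem_iInter.mp hx₀ j))

/-- **(Generalization of STii)** Given any sequence of nonempty open sets
(U_j), a continuous strongly transitive map of a nonempty compact metric space
has a point x₀ and a strictly increasing sequence (m_j) with F^{m_j}(x₀) in the
closure of U_j for every j. -/
theorem exists_orbit_visiting_sequence {X : Type*} [MetricSpace X]
    [CompactSpace X] [Nonempty X] (F : X → X) (hFc : Continuous F)
    (hF : StronglyTransitive F)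
    (U : ℕ → Set X) (hUopen : ∀ j, IsOpen (U j)) (hUne : ∀ j, (U j).Nonempty) :
    ∃ (x₀ : X) (msec : ℕ → ℕ), StrictMono msec ∧
      ∀ j : ℕ, F^[msec j] x₀ ∈ closure (U j) :=
  exists_orbit_visiting_sequence_general F hFc hF U hUopen hUne
end

section
/- (Existence and semiconjugacy of the Boyland–Franks projection) For every z ∈ ℝ^d the limit lim_{n→∞} m^{−n} v·F̂ⁿ(z) exists, the convergence is uniform in z, the resulting function Φ̂(z) = k⁻¹ lim_{n→∞} m^{−n} v·F̂ⁿ(z) is continuous on ℝ^d, and Φ̂(F̂(z)) = m Φ̂(z) for every z ∈ ℝ^d. -/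
open Filter Topology Matrix

noncomputable section

/-!
Writing `φ z = v ⬝ᵥ z`, the eigenvector relation gives `φ (F̂ z) = m φ z + g z` with
`g = v ⬝ᵥ G` continuous and ℤ^d-periodic, hence bounded. Iterating,
`m⁻ⁿ φ (F̂ⁿ z) = φ z + ∑_{j<n} m^{-(j+1)} g (F̂ʲ z)`, a series dominated uniformly in `z` by a
geometric one since `|m| > 1`. The uniform limit of the continuous functions `m⁻ⁿ φ ∘ F̂ⁿ` is
continuous, and shifting the index by one gives the semiconjugacy.
-/

section Rescaling

variable {𝕜 E X : Type*} [NormedField 𝕜] [NormedAddCommGroup E] [NormedSpace 𝕜 E]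
  {F : X → X} {φ g : X → E} {m : 𝕜}

theorem inv_pow_smul_iterate_eq_add_sum (hm : m ≠ 0) (h : ∀ z, φ (F z) = m • φ z + g z)
    (n : ℕ) (z : X) :
    (m ^ n)⁻¹ • φ (F^[n] z) = φ z + ∑ j ∈ Finset.range n, (m ^ (j + 1))⁻¹ • g (F^[j] z) := by
  induction n with
  | zero => simp
  | succ n ih =>
    have hcancel : (m ^ (n + 1))⁻¹ * m = (m ^ n)⁻¹ := by
      rw [pow_succ, mul_inv, mul_assoc, inv_mul_cancel₀ hm, mul_one]
    rw [Function.iterate_succ_apply', h, smul_add, smul_smul, hcancel, ih,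
      Finset.sum_range_succ, add_assoc]

theorem tendstoUniformly_inv_pow_smul_iterate [CompleteSpace E] (hm : 1 < ‖m‖) {C : ℝ}
    (hg : ∀ z, ‖g z‖ ≤ C) (h : ∀ z, φ (F z) = m • φ z + g z) :
    TendstoUniformly (fun n z => (m ^ n)⁻¹ • φ (F^[n] z))
      (fun z => φ z + ∑' j, (m ^ (j + 1))⁻¹ • g (F^[j] z)) atTop := by
  have hm0 : m ≠ 0 := norm_pos_iff.mp (one_pos.trans hm)
  have hsum : Summable fun j : ℕ => ‖m‖⁻¹ ^ (j + 1) * C :=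
    ((summable_geometric_of_lt_one (by positivity) (inv_lt_one_of_one_lt₀ hm)).comp_injective
      (add_left_injective 1)).mul_right C
  have hbound (j : ℕ) (z : X) : ‖(m ^ (j + 1))⁻¹ • g (F^[j] z)‖ ≤ ‖m‖⁻¹ ^ (j + 1) * C := by
    rw [norm_smul, norm_inv, norm_pow, ← inv_pow]
    gcongr
    exact hg _
  have hseries := tendstoUniformly_tsum_nat hsum hbound
  simp_rw [inv_pow_smul_iterate_eq_add_sum hm0 h]
  rw [Metric.tendstoUniformly_iff] at hseries ⊢
  simpa only [dist_add_left] using hseries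

theorem apply_eq_smul_of_tendsto_inv_pow_smul_iterate (hm : m ≠ 0) {L : X → E}
    (hL : ∀ z, Tendsto (fun n => (m ^ n)⁻¹ • φ (F^[n] z)) atTop (𝓝 (L z))) (z : X) :
    L (F z) = m • L z := by
  have hshift : (fun n => (m ^ n)⁻¹ • φ (F^[n] (F z))) =
      fun n => m • ((m ^ (n + 1))⁻¹ • φ (F^[n + 1] z)) := by
    funext n
    rw [smul_smul, pow_succ, mul_inv, mul_left_comm, mul_inv_cancel₀ hm, mul_one,
      Function.iterate_succ_apply]
  refine tendsto_nhds_unique (hL (F z)) ?_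
  rw [hshift]
  exact ((hL z).comp (tendsto_add_atTop_nat 1)).const_smul m

theorem exists_tendstoUniformly_inv_pow_smul_iterate [TopologicalSpace X] [CompleteSpace E]
    (hF : Continuous F) (hφ : Continuous φ) (hm : 1 < ‖m‖) {C : ℝ} (hg : ∀ z, ‖g z‖ ≤ C)
    (h : ∀ z, φ (F z) = m • φ z + g z) :
    ∃ L : X → E, TendstoUniformly (fun n z => (m ^ n)⁻¹ • φ (F^[n] z)) L atTop ∧
      Continuous L ∧ ∀ z, L (F z) = m • L z := by
  have hlim := tendstoUniformly_inv_pow_smul_iterate hm hg h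
  refine ⟨_, hlim, hlim.continuous (Frequently.of_forall fun n => ?_), fun z => ?_⟩
  · exact (hφ.comp (hF.iterate n)).const_smul _
  · exact apply_eq_smul_of_tendsto_inv_pow_smul_iterate (norm_pos_iff.mp (one_pos.trans hm))
      (fun z => hlim.tendsto_at z) z

end Rescaling

theorem exists_norm_le_of_continuous_of_intPeriodic {ι E : Type*} [Fintype ι]
    [SeminormedAddCommGroup E] {f : (ι → ℝ) → E} (hf : Continuous f)
    (hper : ∀ (z : ι → ℝ) (ν : ι → ℤ), f (z + fun i => (ν i : ℝ)) = f z) :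
    ∃ C, ∀ z, ‖f z‖ ≤ C := by
  obtain ⟨C, hC⟩ :=
    (isCompact_Icc (a := (0 : ι → ℝ)) (b := 1)).exists_bound_of_continuousOn hf.continuousOn
  refine ⟨C, fun z => ?_⟩
  have hfract : f z = f fun i => Int.fract (z i) := by
    conv_lhs => rw [show z = (fun i => Int.fract (z i)) + fun i => ((⌊z i⌋ : ℤ) : ℝ) from
      funext fun i => (Int.fract_add_floor (z i)).symm]
    exact hper _ _
  rw [hfract]
  exact hC _ ⟨fun i => Int.fract_nonneg _, fun i => (Int.fract_lt_one _).le⟩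

theorem boyland_franks_projection_general
    (d : ℕ)
    (M : Matrix (Fin d) (Fin d) ℤ) (G : (Fin d → ℝ) → (Fin d → ℝ))
    (Fh : (Fin d → ℝ) → (Fin d → ℝ))
    (hFh : ∀ z, Fh z = (fun i => ∑ j, (M i j : ℝ) * z j) + G z)
    (hGcont : Continuous G)
    (hGper : ∀ (z : Fin d → ℝ) (ν : Fin d → ℤ),
      G (z + fun i => (ν i : ℝ)) = G z)
    (m : ℤ) (hm : 1 < |m|)
    (v : Fin d → ℤ)
    (hvleft : ∀ j, ∑ i, v i * M i j = m * v j)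
    -- k = min{|v·x| : x ∈ ℤ^d, v·x ≠ 0}
    (k : ℤ)
    (hk : IsLeast {n : ℤ | ∃ x : Fin d → ℤ,
      n = |∑ i, v i * x i| ∧ (∑ i, v i * x i) ≠ 0} k) :
    ∃ Φh : (Fin d → ℝ) → ℝ,
      TendstoUniformly
        (fun (n : ℕ) (z : Fin d → ℝ) =>
          ((m : ℝ) ^ n)⁻¹ * ∑ i, (v i : ℝ) * (Fh^[n] z) i)
        (fun z => (k : ℝ) * Φh z) atTop ∧
      Continuous Φh ∧
      ∀ z, Φh (Fh z) = (m : ℝ) * Φh z := by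
  set w : Fin d → ℝ := fun i => (v i : ℝ)
  have hFh_eq : Fh = fun z => M.map (Int.cast : ℤ → ℝ) *ᵥ z + G z := funext hFh
  have hw : w ᵥ* M.map (Int.cast : ℤ → ℝ) = (m : ℝ) • w := funext fun j => by
    simpa [w, vecMul, dotProduct] using congrArg (Int.cast : ℤ → ℝ) (hvleft j)
  have hcocycle (z : Fin d → ℝ) : w ⬝ᵥ Fh z = (m : ℝ) * w ⬝ᵥ z + w ⬝ᵥ G z := by
    rw [hFh_eq, dotProduct_add, dotProduct_mulVec, hw, smul_dotProduct, smul_eq_mul]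
  obtain ⟨C, hC⟩ := exists_norm_le_of_continuous_of_intPeriodic (f := fun z => w ⬝ᵥ G z)
    (by fun_prop) fun z ν => by rw [hGper]
  obtain ⟨L, hL, hLcont, hLsemi⟩ := exists_tendstoUniformly_inv_pow_smul_iterate
    (F := Fh) (φ := fun z => w ⬝ᵥ z) (m := (m : ℝ)) (by rw [hFh_eq]; fun_prop) (by fun_prop)
    (by rw [Real.norm_eq_abs, ← Int.cast_abs]; exact_mod_cast hm) hC hcocycle
  have hk0 : (k : ℝ) ≠ 0 := by
    obtain ⟨x, rfl, hx⟩ := hk.1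
    exact_mod_cast abs_ne_zero.mpr hx
  refine ⟨fun z => (k : ℝ)⁻¹ * L z, ?_, continuous_const.mul hLcont, fun z => ?_⟩
  · simp only [mul_inv_cancel_left₀ hk0]
    exact hL
  · simp only [hLsemi, smul_eq_mul, mul_left_comm]

/-- **Existence and semiconjugacy of the Boyland–Franks projection.**
For F̂(z) = Mz + G(z) with G continuous and ℤ^d-periodic and v an integer left
eigenvector of M with integer eigenvalue m, |m| > 1, the limits
k·Φ̂(z) = lim_{n→∞} m⁻ⁿ v·F̂ⁿ(z) exist uniformly in z, Φ̂ is continuous, and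
Φ̂(F̂(z)) = m·Φ̂(z) for all z. -/
theorem boyland_franks_projection
    (d : ℕ)
    (M : Matrix (Fin d) (Fin d) ℤ) (G : (Fin d → ℝ) → (Fin d → ℝ))
    (Fh : (Fin d → ℝ) → (Fin d → ℝ))
    (hFh : ∀ z, Fh z = (fun i => ∑ j, (M i j : ℝ) * z j) + G z)
    (hGcont : Continuous G)
    (hGper : ∀ (z : Fin d → ℝ) (ν : Fin d → ℤ),
      G (z + fun i => (ν i : ℝ)) = G z)
    (m : ℤ) (hm : 1 < |m|)
    (v : Fin d → ℤ) (hv : v ≠ 0)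
    (hvleft : ∀ j, ∑ i, v i * M i j = m * v j)
    -- k = min{|v·x| : x ∈ ℤ^d, v·x ≠ 0}
    (k : ℤ)
    (hk : IsLeast {n : ℤ | ∃ x : Fin d → ℤ,
      n = |∑ i, v i * x i| ∧ (∑ i, v i * x i) ≠ 0} k) :
    ∃ Φh : (Fin d → ℝ) → ℝ,
      TendstoUniformly
        (fun (n : ℕ) (z : Fin d → ℝ) =>
          ((m : ℝ) ^ n)⁻¹ * ∑ i, (v i : ℝ) * (Fh^[n] z) i)
        (fun z => (k : ℝ) * Φh z) atTop ∧
      Continuous Φh ∧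
      ∀ z, Φh (Fh z) = (m : ℝ) * Φh z :=
  boyland_franks_projection_general d M G Fh hFh hGcont hGper m hm v hvleft k hk
end
end

section
/- (Descent of Φ̂ to the torus) For every z ∈ ℝ^d and every ν ∈ ℤ^d one has Φ̂(z + ν) = Φ̂(z) + k⁻¹(v·ν), and k⁻¹(v·ν) is an integer. Consequently there is a unique continuous map Φ: 𝕋^d → ℝ/ℤ with Φ(π(z)) = Φ̂(z) mod 1 for all z ∈ ℝ^d, and it satisfies Φ(F(ζ)) = m·Φ(ζ) for every ζ ∈ 𝕋^d, where F is the torus map induced by F̂ and m· denotes multiplication by m on ℝ/ℤ. -/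
/-!
Integer translations commute with `F̂` up to its linear part, `F̂ⁿ(z + ν) = F̂ⁿ z + Mⁿν`, and
`vᵀMⁿν = mⁿ (v·ν)`; so the sequence `m⁻ⁿ v·F̂ⁿ` whose limit is `kΦ̂` shifts by exactly `v·ν`
under `z ↦ z + ν`. The values `v·x` form a subgroup of `ℤ` with least positive element `k`, so
`k ∣ v·ν`, `Φ̂` changes by integers only, and `Φ̂ mod 1` factors through the quotient map `π`.
Reindexing the limit gives `Φ̂ ∘ F̂ = m Φ̂`, which descends to `Φ ∘ F = m • Φ`.
-/

open Filter Topology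

noncomputable section

/-- The d-torus 𝕋^d = ℝ^d/ℤ^d. -/
abbrev Torus (d : ℕ) := Fin d → AddCircle (1 : ℝ)

/-- Projection π : ℝ^d → 𝕋^d, z ↦ z mod 1. -/
def projT (d : ℕ) (z : Fin d → ℝ) : Torus d := fun i => (z i : AddCircle (1 : ℝ))

open Matrix Function

section IntegerTranslation

variable {ι : Type*} [Fintype ι] {M : Matrix ι ι ℤ} {Fh : (ι → ℝ) → ι → ℝ}

theorem map_add_intCast_of_eq_mulVec_add_periodic {G : (ι → ℝ) → ι → ℝ}
    (hFh : ∀ z, Fh z = M.map (Int.cast : ℤ → ℝ) *ᵥ z + G z)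
    (hGper : ∀ z (ν : ι → ℤ), G (z + Int.cast ∘ ν) = G z) (z : ι → ℝ) (ν : ι → ℤ) :
    Fh (z + Int.cast ∘ ν) = Fh z + Int.cast ∘ (M *ᵥ ν) := by
  have hcast : (Int.cast ∘ (M *ᵥ ν) : ι → ℝ) = M.map Int.cast *ᵥ (Int.cast ∘ ν) :=
    funext (RingHom.map_mulVec (Int.castRingHom ℝ) M ν)
  rw [hFh, hFh, hGper, hcast, mulVec_add]
  abel

theorem Int.cast_dotProduct {R : Type*} [Ring R] (v w : ι → ℤ) :
    (Int.cast ∘ v : ι → R) ⬝ᵥ (Int.cast ∘ w) = ((v ⬝ᵥ w : ℤ) : R) :=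
  (RingHom.map_dotProduct (Int.castRingHom R) v w).symm

variable [DecidableEq ι]

theorem iterate_add_intCast
    (hF : ∀ z (ν : ι → ℤ), Fh (z + Int.cast ∘ ν) = Fh z + Int.cast ∘ (M *ᵥ ν))
    (n : ℕ) (z : ι → ℝ) (ν : ι → ℤ) :
    Fh^[n] (z + Int.cast ∘ ν) = Fh^[n] z + Int.cast ∘ (M ^ n *ᵥ ν) := by
  induction n with
  | zero => simp
  | succ n ih => rw [iterate_succ_apply', iterate_succ_apply', ih, hF, mulVec_mulVec, ← pow_succ']

theorem Matrix.vecMul_pow_of_vecMul_eq_smul {R : Type*} [CommSemiring R] {A : Matrix ι ι R}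
    {w : ι → R} {r : R} (hw : w ᵥ* A = r • w) (n : ℕ) : w ᵥ* A ^ n = r ^ n • w := by
  induction n with
  | zero => simp
  | succ n ih => rw [pow_succ, ← vecMul_vecMul, ih, smul_vecMul, hw, smul_smul, pow_succ]

variable {v : ι → ℤ} {m : ℤ}

theorem dotProduct_iterate_add_intCast
    (hF : ∀ z (ν : ι → ℤ), Fh (z + Int.cast ∘ ν) = Fh z + Int.cast ∘ (M *ᵥ ν))
    (hv : v ᵥ* M = m • v) (n : ℕ) (z : ι → ℝ) (ν : ι → ℤ) :
    (Int.cast ∘ v : ι → ℝ) ⬝ᵥ Fh^[n] (z + Int.cast ∘ ν)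
      = (Int.cast ∘ v) ⬝ᵥ Fh^[n] z + (m : ℝ) ^ n * ((Int.cast ∘ v) ⬝ᵥ (Int.cast ∘ ν)) := by
  rw [iterate_add_intCast hF, dotProduct_add, Int.cast_dotProduct, Int.cast_dotProduct,
    dotProduct_mulVec, vecMul_pow_of_vecMul_eq_smul hv, smul_dotProduct, smul_eq_mul, Int.cast_mul,
    Int.cast_pow]

theorem limit_add_intCast
    (hF : ∀ z (ν : ι → ℤ), Fh (z + Int.cast ∘ ν) = Fh z + Int.cast ∘ (M *ᵥ ν))
    (hv : v ᵥ* M = m • v) (hm : m ≠ 0) {L : (ι → ℝ) → ℝ}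
    (hL : ∀ z, Tendsto (fun n : ℕ => ((m : ℝ) ^ n)⁻¹ * (Int.cast ∘ v) ⬝ᵥ Fh^[n] z) atTop (𝓝 (L z)))
    (z : ι → ℝ) (ν : ι → ℤ) :
    L (z + Int.cast ∘ ν) = L z + (Int.cast ∘ v) ⬝ᵥ (Int.cast ∘ ν) := by
  refine tendsto_nhds_unique (hL _) (((hL z).add_const _).congr fun n => ?_)
  rw [dotProduct_iterate_add_intCast hF hv, mul_add,
    inv_mul_cancel_left₀ (pow_ne_zero n (Int.cast_ne_zero.2 hm))]

end IntegerTranslation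

theorem eq_mul_of_tendsto_iterate {X : Type*} {f : X → X} {u L : X → ℝ} {m : ℝ} (hm : m ≠ 0)
    (hL : ∀ x, Tendsto (fun n : ℕ => (m ^ n)⁻¹ * u (f^[n] x)) atTop (𝓝 (L x))) (x : X) :
    L (f x) = m * L x := by
  refine tendsto_nhds_unique (hL (f x))
    ((((hL x).comp (tendsto_add_atTop_nat 1)).const_mul m).congr fun n => ?_)
  rw [Function.comp_apply, iterate_succ_apply, pow_succ', mul_inv, mul_assoc,
    mul_inv_cancel_left₀ hm]

theorem AddMonoidHom.int_dvd_of_isLeast_abs {A : Type*} [AddGroup A] (φ : A →+ ℤ) {k : ℤ}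
    (hk : IsLeast {n : ℤ | ∃ x, n = |φ x| ∧ φ x ≠ 0} k) (x : A) : k ∣ φ x := by
  have hmin : IsLeast {n | n ∈ φ.range ∧ 0 < n} k := by
    obtain ⟨⟨x₀, rfl, hx₀⟩, hmin⟩ := hk
    refine ⟨⟨?_, abs_pos.2 hx₀⟩, fun n ⟨⟨y, hy⟩, hn⟩ =>
      hmin ⟨y, by rw [hy, abs_of_pos hn], hy ▸ hn.ne'⟩⟩
    rcases abs_choice (φ x₀) with h | h <;> rw [h]
    · exact ⟨x₀, rfl⟩
    · exact ⟨-x₀, map_neg φ x₀⟩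
  rw [← Int.mem_zmultiples_iff, AddSubgroup.zmultiples_eq_closure, ← AddSubgroup.cyclic_of_min hmin]
  exact ⟨x, rfl⟩

theorem Topology.IsQuotientMap.existsUnique_continuous_comp_eq {X Y Z : Type*}
    [TopologicalSpace X] [TopologicalSpace Y] [TopologicalSpace Z] {f : X → Y} {g : X → Z}
    (hf : IsQuotientMap f) (hg : Continuous g) (hfg : FactorsThrough g f) :
    ∃! Φ : Y → Z, Continuous Φ ∧ ∀ x, Φ (f x) = g x := by
  have hlift (x : X) : g (surjInv hf.surjective (f x)) = g x :=
    hfg (surjInv_eq hf.surjective (f x))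
  refine ⟨g ∘ surjInv hf.surjective, ⟨hf.continuous_iff.2 ?_, hlift⟩, ?_⟩
  · simpa only [comp_def, hlift] using hg
  · rintro Φ ⟨-, hΦ⟩
    funext y
    obtain ⟨x, rfl⟩ := hf.surjective y
    rw [hΦ, Function.comp_apply, hlift]

theorem isQuotientMap_projT (d : ℕ) : Topology.IsQuotientMap (projT d) :=
  (IsOpenQuotientMap.piMap fun _ => QuotientAddGroup.isOpenQuotientMap_mk).isQuotientMap

theorem exists_intCast_of_projT_eq {d : ℕ} {z z' : Fin d → ℝ} (h : projT d z = projT d z') :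
    ∃ ν : Fin d → ℤ, z' = z + Int.cast ∘ ν := by
  have (i : Fin d) : ∃ n : ℤ, z' i = z i + n := by
    obtain ⟨n, hn⟩ := AddSubgroup.mem_zmultiples_iff.1 (QuotientAddGroup.eq.1 (congrFun h i))
    exact ⟨n, by rw [zsmul_one] at hn; linarith⟩
  choose ν hν using this
  exact ⟨ν, funext hν⟩

theorem descent_to_torus_general
    (d : ℕ)
    (M : Matrix (Fin d) (Fin d) ℤ) (G : (Fin d → ℝ) → (Fin d → ℝ))
    (Fh : (Fin d → ℝ) → (Fin d → ℝ))
    (hFh : ∀ z, Fh z = (fun i => ∑ j, (M i j : ℝ) * z j) + G z)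
    (hGper : ∀ (z : Fin d → ℝ) (ν : Fin d → ℤ),
      G (z + fun i => (ν i : ℝ)) = G z)
    -- the induced torus map F
    (F : Torus d → Torus d)
    (hFind : ∀ z, F (projT d z) = projT d (Fh z))
    (m : ℤ) (hm : 1 < |m|)
    (v : Fin d → ℤ)
    (hvleft : ∀ j, ∑ i, v i * M i j = m * v j)
    -- k = min{|v·x| : x ∈ ℤ^d, v·x ≠ 0}
    (k : ℤ)
    (hk : IsLeast {n : ℤ | ∃ x : Fin d → ℤ,
      n = |∑ i, v i * x i| ∧ (∑ i, v i * x i) ≠ 0} k)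
    -- Φ̂(z) = k⁻¹ lim_{n→∞} m⁻ⁿ v·F̂ⁿ(z), which exists and is continuous
    (Φh : (Fin d → ℝ) → ℝ)
    (hΦlim : ∀ z, Tendsto
      (fun n : ℕ => ((m : ℝ) ^ n)⁻¹ * ∑ i, (v i : ℝ) * (Fh^[n] z) i)
      atTop (nhds ((k : ℝ) * Φh z)))
    (hΦcont : Continuous Φh) :
    (∀ (z : Fin d → ℝ) (ν : Fin d → ℤ),
      Φh (z + fun i => (ν i : ℝ)) = Φh z + (k : ℝ)⁻¹ * ∑ i, (v i : ℝ) * (ν i : ℝ)) ∧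
    (∀ ν : Fin d → ℤ, k ∣ ∑ i, v i * ν i) ∧
    (∃ Φ : Torus d → AddCircle (1 : ℝ),
      (Continuous Φ ∧ ∀ z, Φ (projT d z) = ((Φh z : ℝ) : AddCircle (1 : ℝ))) ∧
      (∀ Φ' : Torus d → AddCircle (1 : ℝ), Continuous Φ' →
        (∀ z, Φ' (projT d z) = ((Φh z : ℝ) : AddCircle (1 : ℝ))) → Φ' = Φ) ∧
      (∀ ζ : Torus d, Φ (F ζ) = m • Φ ζ)) := by
  have hm0 : m ≠ 0 := by rintro rfl; simp at hm
  have hk0 : (k : ℝ) ≠ 0 := by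
    obtain ⟨x, rfl, hx⟩ := hk.1
    exact_mod_cast (abs_pos.2 hx).ne'
  have hF := map_add_intCast_of_eq_mulVec_add_periodic (M := M) hFh hGper
  have hdvd : ∀ ν, k ∣ v ⬝ᵥ ν :=
    (AddMonoidHom.mk' (v ⬝ᵥ ·) (dotProduct_add v)).int_dvd_of_isLeast_abs hk
  have hshift (z : Fin d → ℝ) (ν : Fin d → ℤ) :
      Φh (z + Int.cast ∘ ν) = Φh z + (k : ℝ)⁻¹ * (Int.cast ∘ v) ⬝ᵥ (Int.cast ∘ ν) := by
    have := limit_add_intCast hF (funext hvleft) hm0 hΦlim z ν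
    field_simp
    linarith
  have hfactor : FactorsThrough (fun z => (Φh z : AddCircle (1 : ℝ))) (projT d) := by
    intro z z' h
    obtain ⟨ν, rfl⟩ := exists_intCast_of_projT_eq h
    obtain ⟨c, hc⟩ := hdvd ν
    simp [hshift, Int.cast_dotProduct, hc, hk0]
  obtain ⟨Φ, ⟨hΦc, hΦ⟩, huniq⟩ := (isQuotientMap_projT d).existsUnique_continuous_comp_eq
    (g := fun z => (Φh z : AddCircle (1 : ℝ))) ((AddCircle.continuous_mk' 1).comp hΦcont) hfactor
  have hΦh (z : Fin d → ℝ) : Φh (Fh z) = m * Φh z := mul_left_cancel₀ hk0 <| by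
    rw [eq_mul_of_tendsto_iterate (u := ((Int.cast ∘ v) ⬝ᵥ ·)) (L := fun z => k * Φh z)
      (Int.cast_ne_zero.2 hm0) hΦlim z, mul_left_comm]
  refine ⟨hshift, hdvd, Φ, ⟨hΦc, hΦ⟩, fun Φ' hΦ'c hΦ' => huniq Φ' ⟨hΦ'c, hΦ'⟩, fun ζ => ?_⟩
  obtain ⟨z, rfl⟩ := (isQuotientMap_projT d).surjective ζ
  rw [hFind, hΦ, hΦ, hΦh, ← zsmul_eq_mul, AddCircle.coe_zsmul]

/-- **Descent of Φ̂ to the torus.** Φ̂(z+ν) = Φ̂(z) + k⁻¹(v·ν) with k⁻¹(v·ν) an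
integer; hence there is a unique continuous Φ : 𝕋^d → ℝ/ℤ with
Φ(π z) = Φ̂(z) mod 1, and it satisfies Φ(F ζ) = m·Φ(ζ). -/
theorem descent_to_torus
    (d : ℕ)
    (M : Matrix (Fin d) (Fin d) ℤ) (G : (Fin d → ℝ) → (Fin d → ℝ))
    (Fh : (Fin d → ℝ) → (Fin d → ℝ))
    (hFh : ∀ z, Fh z = (fun i => ∑ j, (M i j : ℝ) * z j) + G z)
    (hGcont : Continuous G)
    (hGper : ∀ (z : Fin d → ℝ) (ν : Fin d → ℤ),
      G (z + fun i => (ν i : ℝ)) = G z)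
    -- the induced torus map F
    (F : Torus d → Torus d) (hFc : Continuous F)
    (hFind : ∀ z, F (projT d z) = projT d (Fh z))
    (m : ℤ) (hm : 1 < |m|)
    (v : Fin d → ℤ) (hv : v ≠ 0)
    (hvleft : ∀ j, ∑ i, v i * M i j = m * v j)
    -- k = min{|v·x| : x ∈ ℤ^d, v·x ≠ 0}
    (k : ℤ)
    (hk : IsLeast {n : ℤ | ∃ x : Fin d → ℤ,
      n = |∑ i, v i * x i| ∧ (∑ i, v i * x i) ≠ 0} k)
    -- Φ̂(z) = k⁻¹ lim_{n→∞} m⁻ⁿ v·F̂ⁿ(z), which exists and is continuous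
    (Φh : (Fin d → ℝ) → ℝ)
    (hΦlim : ∀ z, Tendsto
      (fun n : ℕ => ((m : ℝ) ^ n)⁻¹ * ∑ i, (v i : ℝ) * (Fh^[n] z) i)
      atTop (nhds ((k : ℝ) * Φh z)))
    (hΦcont : Continuous Φh) :
    (∀ (z : Fin d → ℝ) (ν : Fin d → ℤ),
      Φh (z + fun i => (ν i : ℝ)) = Φh z + (k : ℝ)⁻¹ * ∑ i, (v i : ℝ) * (ν i : ℝ)) ∧
    (∀ ν : Fin d → ℤ, k ∣ ∑ i, v i * ν i) ∧
    (∃ Φ : Torus d → AddCircle (1 : ℝ),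
      (Continuous Φ ∧ ∀ z, Φ (projT d z) = ((Φh z : ℝ) : AddCircle (1 : ℝ))) ∧
      (∀ Φ' : Torus d → AddCircle (1 : ℝ), Continuous Φ' →
        (∀ z, Φ' (projT d z) = ((Φh z : ℝ) : AddCircle (1 : ℝ))) → Φ' = Φ) ∧
      (∀ ζ : Torus d, Φ (F ζ) = m • Φ ζ)) :=
  descent_to_torus_general d M G Fh hFh hGper F hFind m hm v hvleft k hk Φh hΦlim hΦcont
end
end

section
/- (Lipschitz-type estimate for Φ̂) For every z₁, z₂ ∈ ℝ^d, | (Φ̂(z₁) − Φ̂(z₂)) − k⁻¹ v·(z₁ − z₂) | ≤ (2/(|m| − 1)) k⁻¹ ‖v‖ ‖G‖_∞, where ‖G‖_∞ = sup_{z∈ℝ^d} ‖G(z)‖. In particular, | |Φ̂(z₁) − Φ̂(z₂)| − k⁻¹|v·(z₁ − z₂)| | ≤ (2/(|m| − 1)) k⁻¹ ‖v‖ ‖G‖_∞. -/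
/-!
Write `S z = v·z`. Since `v` is a left eigenvector of `M`, `S (F̂ z) = m S z + v·G z`, and
`|v·G z| ≤ ‖v‖ ‖G‖_∞` (finite because `G` is continuous and periodic). Hence the normalised
orbit values `m⁻ⁿ S (F̂ⁿ z)`, which converge to `k Φ̂ z`, move by at most `‖v‖ ‖G‖_∞ |m|⁻ⁿ⁻¹`
per step, so `|k Φ̂ z - S z| ≤ ‖v‖ ‖G‖_∞ / (|m| - 1)`. Subtracting this at `z₁` and `z₂` and
dividing by `k > 0` gives the estimate.
-/

open Filter Topology

noncomputable section

/-- Euclidean space ℝ^d. -/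
abbrev E (d : ℕ) := EuclideanSpace ℝ (Fin d)

/-- Cast of an integer vector into ℝ^d. -/
def intCast {d : ℕ} (ν : Fin d → ℤ) : E d := WithLp.toLp 2 (fun i => (ν i : ℝ))

theorem abs_sub_le_of_tendsto_inv_pow_mul {m D L : ℝ} {s : ℕ → ℝ} (hm : 1 < |m|)
    (hs : ∀ n, |s (n + 1) - m * s n| ≤ D)
    (hL : Tendsto (fun n => (m ^ n)⁻¹ * s n) atTop (𝓝 L)) :
    |L - s 0| ≤ D / (|m| - 1) := by
  have hm₀ : m ≠ 0 := by rintro rfl; norm_num at hm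
  have hr : |m|⁻¹ < 1 := inv_lt_one_of_one_lt₀ hm
  have hstep : ∀ n, dist ((m ^ n)⁻¹ * s n) ((m ^ (n + 1))⁻¹ * s (n + 1)) ≤
      D * |m|⁻¹ * |m|⁻¹ ^ n := by
    intro n
    have : (m ^ n)⁻¹ * s n - (m ^ (n + 1))⁻¹ * s (n + 1) =
        -((m ^ (n + 1))⁻¹ * (s (n + 1) - m * s n)) := by
      field_simp; ring
    rw [Real.dist_eq, this, abs_neg, abs_mul, abs_inv, abs_pow, mul_comm, pow_succ,
      mul_inv, mul_assoc, ← inv_pow, mul_comm (|m|⁻¹ ^ n)]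
    exact mul_le_mul_of_nonneg_right (hs n) (by positivity)
  have h := dist_le_of_le_geometric_of_tendsto₀ _ _ hr hstep hL
  rw [dist_comm, Real.dist_eq, pow_zero, inv_one, one_mul] at h
  convert h using 1
  have : |m| - 1 ≠ 0 := by linarith
  field_simp

theorem isCompact_range_of_periodic {d : ℕ} {X : Type*} [TopologicalSpace X] {f : E d → X}
    (hf : Continuous f) (hper : ∀ (z : E d) (ν : Fin d → ℤ), f (z + intCast ν) = f z) :
    IsCompact (Set.range f) := by
  have hcube : IsCompact (WithLp.toLp 2 '' Set.Icc (0 : Fin d → ℝ) 1 : Set (E d)) :=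
    isCompact_Icc.image (EuclideanSpace.equiv (Fin d) ℝ).symm.continuous
  suffices Set.range f ⊆ f '' (WithLp.toLp 2 '' Set.Icc (0 : Fin d → ℝ) 1) from
    (Set.image_subset_range _ _).antisymm this ▸ hcube.image hf
  rintro - ⟨z, rfl⟩
  have hz : WithLp.toLp 2 (fun i => Int.fract (z i)) + intCast (fun i => ⌊z i⌋) = z := by
    ext i; simp [intCast, Int.fract_add_floor]
  exact ⟨_, ⟨_, ⟨fun i => Int.fract_nonneg _, fun i => (Int.fract_lt_one _).le⟩, rfl⟩,
    by rw [← hper _ (fun i => ⌊z i⌋), hz]⟩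

theorem sum_mul_mulVec_eq_mul_of_left_eigenvector {ι : Type*} [Fintype ι] (M : Matrix ι ι ℤ)
    (v : ι → ℤ) (m : ℤ) (hv : ∀ j, ∑ i, v i * M i j = m * v j) (x : ι → ℝ) :
    ∑ i, (v i : ℝ) * ∑ j, (M i j : ℝ) * x j = m * ∑ j, (v j : ℝ) * x j := by
  simp_rw [Finset.mul_sum, ← mul_assoc]
  rw [Finset.sum_comm]
  refine Finset.sum_congr rfl fun j _ => ?_
  rw [← Finset.sum_mul]
  exact congrArg (· * x j) (mod_cast hv j)

theorem inner_intCast {d : ℕ} (v : Fin d → ℤ) (w : E d) :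
    inner ℝ (intCast v) w = ∑ i, (v i : ℝ) * w i := by
  simp [PiLp.inner_apply, intCast, mul_comm]

theorem abs_sub_sub_inv_mul_sub_le {k a₁ a₂ s₁ s₂ B : ℝ} (hk : 0 < k)
    (h₁ : |k * a₁ - s₁| ≤ B) (h₂ : |k * a₂ - s₂| ≤ B) :
    |(a₁ - a₂) - k⁻¹ * (s₁ - s₂)| ≤ k⁻¹ * (2 * B) := by
  have : (a₁ - a₂) - k⁻¹ * (s₁ - s₂) = k⁻¹ * ((k * a₁ - s₁) - (k * a₂ - s₂)) := by
    field_simp; ring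
  rw [this, abs_mul, abs_of_pos (inv_pos.mpr hk), two_mul]
  gcongr
  exact (abs_sub _ _).trans (add_le_add h₁ h₂)

theorem lipschitz_estimate_phi_general
    (d : ℕ)
    (M : Matrix (Fin d) (Fin d) ℤ) (G : E d → E d) (Fh : E d → E d)
    (hFh : ∀ z i, Fh z i = (∑ j, (M i j : ℝ) * z j) + G z i)
    (hGcont : Continuous G)
    (hGper : ∀ (z : E d) (ν : Fin d → ℤ), G (z + intCast ν) = G z)
    (m : ℤ) (hm : 1 < |m|)
    (v : Fin d → ℤ)
    (hvleft : ∀ j, ∑ i, v i * M i j = m * v j)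
    -- k = min{|v·x| : x ∈ ℤ^d, v·x ≠ 0}
    (k : ℤ)
    (hk : IsLeast {n : ℤ | ∃ x : Fin d → ℤ,
      n = |∑ i, v i * x i| ∧ (∑ i, v i * x i) ≠ 0} k)
    -- Φ̂(z) = k⁻¹ lim_{n→∞} m⁻ⁿ v·F̂ⁿ(z), which exists and is continuous
    (Φh : E d → ℝ)
    (hΦlim : ∀ z, Tendsto
      (fun n : ℕ => ((m : ℝ) ^ n)⁻¹ * ∑ i, (v i : ℝ) * (Fh^[n] z) i)
      atTop (nhds ((k : ℝ) * Φh z))) :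
    ∀ z₁ z₂ : E d,
      |(Φh z₁ - Φh z₂) - (k : ℝ)⁻¹ * ∑ i, (v i : ℝ) * (z₁ i - z₂ i)| ≤
        2 / (|(m : ℝ)| - 1) * ((k : ℝ)⁻¹ * (‖intCast v‖ * ⨆ z : E d, ‖G z‖)) ∧
      abs (|Φh z₁ - Φh z₂| - (k : ℝ)⁻¹ * |∑ i, (v i : ℝ) * (z₁ i - z₂ i)|) ≤
        2 / (|(m : ℝ)| - 1) * ((k : ℝ)⁻¹ * (‖intCast v‖ * ⨆ z : E d, ‖G z‖)) := by
  intro z₁ z₂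
  have hk₀ : (0 : ℝ) < k := by
    obtain ⟨x, rfl, hx⟩ := hk.1
    exact_mod_cast abs_pos.mpr hx
  have hGle : ∀ z, ‖G z‖ ≤ ⨆ z : E d, ‖G z‖ := le_ciSup <| Set.range_comp norm G ▸
    ((isCompact_range_of_periodic hGcont hGper).image continuous_norm).bddAbove
  have hstep : ∀ z, |∑ i, (v i : ℝ) * Fh z i - m * ∑ i, (v i : ℝ) * z i| ≤
      ‖intCast v‖ * ⨆ z : E d, ‖G z‖ := fun z => by
    simp only [hFh, mul_add, Finset.sum_add_distrib]
    rw [sum_mul_mulVec_eq_mul_of_left_eigenvector M v m hvleft, add_sub_cancel_left,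
      ← inner_intCast]
    exact (abs_real_inner_le_norm _ _).trans (mul_le_mul_of_nonneg_left (hGle z) (norm_nonneg _))
  have hlim : ∀ z, |k * Φh z - ∑ i, (v i : ℝ) * z i| ≤
      ‖intCast v‖ * (⨆ z : E d, ‖G z‖) / (|(m : ℝ)| - 1) := fun z =>
    abs_sub_le_of_tendsto_inv_pow_mul (mod_cast hm)
      (fun n => by simpa only [Function.iterate_succ_apply'] using hstep (Fh^[n] z)) (hΦlim z)
  have hmain : |(Φh z₁ - Φh z₂) - (k : ℝ)⁻¹ * ∑ i, (v i : ℝ) * (z₁ i - z₂ i)| ≤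
      2 / (|(m : ℝ)| - 1) * ((k : ℝ)⁻¹ * (‖intCast v‖ * ⨆ z : E d, ‖G z‖)) := by
    rw [show ∑ i, (v i : ℝ) * (z₁ i - z₂ i) = ∑ i, (v i : ℝ) * z₁ i - ∑ i, (v i : ℝ) * z₂ i by
      simp only [mul_sub, Finset.sum_sub_distrib]]
    convert abs_sub_sub_inv_mul_sub_le hk₀ (hlim z₁) (hlim z₂) using 1
    ring
  refine ⟨hmain, le_trans ?_ hmain⟩
  simpa only [abs_mul, abs_inv, abs_of_pos hk₀] using
    abs_abs_sub_abs_le_abs_sub (Φh z₁ - Φh z₂) ((k : ℝ)⁻¹ * ∑ i, (v i : ℝ) * (z₁ i - z₂ i))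

/-- **Lipschitz-type estimate for Φ̂.** For all z₁, z₂,
|(Φ̂(z₁) − Φ̂(z₂)) − k⁻¹ v·(z₁−z₂)| ≤ (2/(|m|−1)) k⁻¹ ‖v‖ ‖G‖_∞, and in
particular ||Φ̂(z₁) − Φ̂(z₂)| − k⁻¹|v·(z₁−z₂)|| ≤ (2/(|m|−1)) k⁻¹ ‖v‖ ‖G‖_∞. -/
theorem lipschitz_estimate_phi
    (d : ℕ)
    (M : Matrix (Fin d) (Fin d) ℤ) (G : E d → E d) (Fh : E d → E d)
    (hFh : ∀ z i, Fh z i = (∑ j, (M i j : ℝ) * z j) + G z i)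
    (hGcont : Continuous G)
    (hGper : ∀ (z : E d) (ν : Fin d → ℤ), G (z + intCast ν) = G z)
    (m : ℤ) (hm : 1 < |m|)
    (v : Fin d → ℤ) (hv : v ≠ 0)
    (hvleft : ∀ j, ∑ i, v i * M i j = m * v j)
    -- k = min{|v·x| : x ∈ ℤ^d, v·x ≠ 0}
    (k : ℤ)
    (hk : IsLeast {n : ℤ | ∃ x : Fin d → ℤ,
      n = |∑ i, v i * x i| ∧ (∑ i, v i * x i) ≠ 0} k)
    -- Φ̂(z) = k⁻¹ lim_{n→∞} m⁻ⁿ v·F̂ⁿ(z), which exists and is continuous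
    (Φh : E d → ℝ)
    (hΦlim : ∀ z, Tendsto
      (fun n : ℕ => ((m : ℝ) ^ n)⁻¹ * ∑ i, (v i : ℝ) * (Fh^[n] z) i)
      atTop (nhds ((k : ℝ) * Φh z)))
    (hΦcont : Continuous Φh) :
    ∀ z₁ z₂ : E d,
      |(Φh z₁ - Φh z₂) - (k : ℝ)⁻¹ * ∑ i, (v i : ℝ) * (z₁ i - z₂ i)| ≤
        2 / (|(m : ℝ)| - 1) * ((k : ℝ)⁻¹ * (‖intCast v‖ * ⨆ z : E d, ‖G z‖)) ∧
      abs (|Φh z₁ - Φh z₂| - (k : ℝ)⁻¹ * |∑ i, (v i : ℝ) * (z₁ i - z₂ i)|) ≤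
        2 / (|(m : ℝ)| - 1) * ((k : ℝ)⁻¹ * (‖intCast v‖ * ⨆ z : E d, ‖G z‖)) :=
  lipschitz_estimate_phi_general d M G Fh hFh hGcont hGper m hm v hvleft k hk Φh hΦlim
end
end

section
/- (Claim A) Suppose in addition that F̂ is C¹ and has a (K,α)-expanding cone system with respect to a unit vector w and the subspace W := {u ∈ ℝ^d : v·u = 0}. If z₁ ≠ z₂ and Φ̂(z₁) = Φ̂(z₂), then z₁ and z₂ cannot be connected by a horizontal curve: there is no C¹ curve γ: [0,1] → ℝ^d with γ(0) = z₁, γ(1) = z₂, γ'(t) ≠ 0 for all t, and γ'(t) lying in the cone C_α for all t. -/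
open Filter Topology Set

noncomputable section

/-- Action of an integer matrix on ℝ^d. -/
def mulVecR {d : ℕ} (M : Matrix (Fin d) (Fin d) ℤ) (z : E d) : E d :=
  WithLp.toLp 2 (fun i => ∑ j, (M i j : ℝ) * z j)

/-- The cone C_α = {a•w + b : b ∈ W, |b| ≤ α|a|}. -/
def Cone {d : ℕ} (w : E d) (W : Set (E d)) (α : ℝ) : Set (E d) :=
  {u | ∃ (a : ℝ) (b : E d), b ∈ W ∧ u = a • w + b ∧ ‖b‖ ≤ α * |a|}

/-- F̂ has a (K,α)-expanding cone system with respect to the unit vector w and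
the subspace (set) W. -/
def HasConeSystem {d : ℕ} (Fh : E d → E d) (w : E d) (W : Set (E d)) (K α : ℝ) : Prop :=
  1 < K ∧ 0 < α ∧
  (∀ u : E d, ∃! ab : ℝ × E d, ab.2 ∈ W ∧ u = ab.1 • w + ab.2) ∧
  (∀ (z : E d) (a : ℝ) (b : E d) (a' : ℝ) (b' : E d), b ∈ W → b' ∈ W →
      fderiv ℝ Fh z (a • w + b) = a' • w + b' → ‖b‖ ≤ α * |a| →
      ‖b'‖ < α * |a'| ∧ K * |a| < |a'|) ∧
  (∀ (z : E d) (a : ℝ) (b : E d), b ∈ W → α * |a| < ‖b‖ →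
      ‖fderiv ℝ Fh z (a • w + b)‖ < K * ‖a • w + b‖)

/-!
Along a horizontal curve `γ`, the derivatives of `F̂ⁿ ∘ γ` stay in the cone and their
`v`-components grow like `Kⁿ`; being continuous and nonvanishing they have constant sign, so
`v · F̂ⁿ z₂ - v · F̂ⁿ z₁` grows like `Kⁿ`. On the other hand `v · F̂ z - m (v · z) = v · G z` is
bounded by periodicity, so `k Φ̂` stays at bounded distance from `v ·` and satisfies
`k Φ̂ ∘ F̂ = m · k Φ̂`. Hence `Φ̂ z₁ = Φ̂ z₂` keeps `v · F̂ⁿ z₂ - v · F̂ⁿ z₁` bounded.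
-/

section Cocycle

variable {X : Type*} {F : X → X} {ℓ φ : X → ℝ} {m C : ℝ}

theorem abs_sub_le_of_tendsto_inv_pow_mul_iterate (hm : 1 < |m|)
    (hstep : ∀ z, |ℓ (F z) - m * ℓ z| ≤ C)
    (hφ : ∀ z, Tendsto (fun n : ℕ => (m ^ n)⁻¹ * ℓ (F^[n] z)) atTop (𝓝 (φ z))) (z : X) :
    |ℓ z - φ z| ≤ C * |m|⁻¹ / (1 - |m|⁻¹) := by
  have hm0 : m ≠ 0 := abs_pos.mp (one_pos.trans hm)
  have hr : |m|⁻¹ < 1 := inv_lt_one_of_one_lt₀ hm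
  have hdist : ∀ n : ℕ, dist ((m ^ n)⁻¹ * ℓ (F^[n] z)) ((m ^ (n + 1))⁻¹ * ℓ (F^[n + 1] z))
      ≤ C * |m|⁻¹ * |m|⁻¹ ^ n := by
    intro n
    have hsucc : (m ^ n)⁻¹ * ℓ (F^[n] z) - (m ^ (n + 1))⁻¹ * ℓ (F^[n + 1] z)
        = -((m ^ (n + 1))⁻¹ * (ℓ (F (F^[n] z)) - m * ℓ (F^[n] z))) := by
      rw [Function.iterate_succ_apply']; field_simp; ring
    rw [Real.dist_eq, hsucc, abs_neg, abs_mul, abs_inv, abs_pow, pow_succ, mul_inv]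
    calc (|m| ^ n)⁻¹ * |m|⁻¹ * |ℓ (F (F^[n] z)) - m * ℓ (F^[n] z)|
        ≤ (|m| ^ n)⁻¹ * |m|⁻¹ * C := by gcongr; exact hstep _
      _ = C * |m|⁻¹ * |m|⁻¹ ^ n := by rw [inv_pow]; ring
  simpa [Real.dist_eq] using dist_le_of_le_geometric_of_tendsto₀ _ _ hr hdist (hφ z)

theorem semiconj_of_tendsto_inv_pow_mul_iterate (hm : m ≠ 0)
    (hφ : ∀ z, Tendsto (fun n : ℕ => (m ^ n)⁻¹ * ℓ (F^[n] z)) atTop (𝓝 (φ z))) :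
    Function.Semiconj φ F (m * ·) := by
  intro z
  refine tendsto_nhds_unique (hφ (F z)) ?_
  convert ((hφ z).comp (tendsto_add_atTop_nat 1)).const_mul m using 2 with n
  simp only [Function.comp_apply, Function.iterate_succ_apply, pow_succ]
  field_simp

theorem abs_sub_iterate_le_of_eq (hm : 1 < |m|) (hstep : ∀ z, |ℓ (F z) - m * ℓ z| ≤ C)
    (hφ : ∀ z, Tendsto (fun n : ℕ => (m ^ n)⁻¹ * ℓ (F^[n] z)) atTop (𝓝 (φ z)))
    {z₁ z₂ : X} (h : φ z₁ = φ z₂) (n : ℕ) :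
    |ℓ (F^[n] z₂) - ℓ (F^[n] z₁)| ≤ 2 * (C * |m|⁻¹ / (1 - |m|⁻¹)) := by
  have hsemi := (semiconj_of_tendsto_inv_pow_mul_iterate
    (abs_pos.mp (one_pos.trans hm)) hφ).iterate_right n
  have hφn : φ (F^[n] z₂) = φ (F^[n] z₁) := by rw [hsemi, hsemi, h]
  have h₁ := abs_sub_le_of_tendsto_inv_pow_mul_iterate hm hstep hφ (F^[n] z₁)
  have h₂ := abs_sub_le_of_tendsto_inv_pow_mul_iterate hm hstep hφ (F^[n] z₂)
  rw [hφn] at h₂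
  calc |ℓ (F^[n] z₂) - ℓ (F^[n] z₁)|
      ≤ |ℓ (F^[n] z₂) - φ (F^[n] z₁)| + |φ (F^[n] z₁) - ℓ (F^[n] z₁)| := abs_sub_le _ _ _
    _ ≤ 2 * (C * |m|⁻¹ / (1 - |m|⁻¹)) := by rw [abs_sub_comm (φ _)]; linarith

end Cocycle

theorem exists_forall_norm_le_of_intCast_periodic {d : ℕ} {Y : Type*} [SeminormedAddCommGroup Y]
    {f : E d → Y} (hf : Continuous f) (hper : ∀ z ν, f (z + intCast ν) = f z) :
    ∃ C, ∀ z, ‖f z‖ ≤ C := by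
  set cube : Set (E d) := WithLp.toLp 2 '' Set.pi univ fun _ => Icc 0 1
  have hcube : IsCompact cube :=
    (isCompact_univ_pi fun _ => isCompact_Icc).image (PiLp.continuous_toLp 2 _)
  obtain ⟨C, hC⟩ := hcube.exists_bound_of_continuousOn hf.continuousOn
  refine ⟨C, fun z => ?_⟩
  have hfract : z - intCast (fun i => ⌊z i⌋) ∈ cube :=
    ⟨fun i => Int.fract (z i), fun i _ => ⟨Int.fract_nonneg _, (Int.fract_lt_one _).le⟩, by
      ext i; simp [intCast]⟩
  have := hC _ hfract
  rwa [← hper _ (fun i => ⌊z i⌋), sub_add_cancel] at this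

def dotCLM {d : ℕ} (v : Fin d → ℤ) : E d →L[ℝ] ℝ := ∑ i, (v i : ℝ) • EuclideanSpace.proj i

@[simp]
theorem dotCLM_apply {d : ℕ} (v : Fin d → ℤ) (u : E d) : dotCLM v u = ∑ i, (v i : ℝ) * u i := by
  simp [dotCLM]

theorem dotCLM_mulVecR {d : ℕ} {M : Matrix (Fin d) (Fin d) ℤ} {v : Fin d → ℤ} {m : ℤ}
    (hv : ∀ j, ∑ i, v i * M i j = m * v j) (z : E d) :
    dotCLM v (mulVecR M z) = m * dotCLM v z := by
  have hvR : ∀ j, ∑ i, (v i : ℝ) * M i j = m * v j := fun j => by exact_mod_cast hv j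
  simp only [dotCLM_apply, mulVecR, Finset.mul_sum]
  rw [Finset.sum_comm]
  refine Finset.sum_congr rfl fun j _ => ?_
  simp_rw [← mul_assoc]
  rw [← Finset.sum_mul, hvR]

theorem contDiff_mulVecR {d : ℕ} (M : Matrix (Fin d) (Fin d) ℤ) {n : WithTop ℕ∞} :
    ContDiff ℝ n (mulVecR M) := by
  rw [contDiff_euclidean]
  intro i
  simp only [mulVecR]
  exact ContDiff.sum fun j _ => contDiff_const.mul (by fun_prop)

theorem IsPreconnected.forall_le_or_forall_le_neg_of_le_abs {X : Type*} [TopologicalSpace X]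
    {s : Set X} (hs : IsPreconnected s) {h : X → ℝ} (hh : ContinuousOn h s) {c : ℝ} (hc : 0 < c)
    (habs : ∀ x ∈ s, c ≤ |h x|) : (∀ x ∈ s, c ≤ h x) ∨ (∀ x ∈ s, h x ≤ -c) := by
  by_contra! hcon
  obtain ⟨⟨x, hx, hxc⟩, ⟨y, hy, hyc⟩⟩ := hcon
  have hx' : h x ≤ -c := (le_abs'.1 (habs x hx)).resolve_right hxc.not_ge
  have hy' : c ≤ h y := (le_abs'.1 (habs y hy)).resolve_left hyc.not_ge
  obtain ⟨r, hr, hr0⟩ : (0 : ℝ) ∈ h '' s :=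
    hs.intermediate_value hx hy hh ⟨by linarith, by linarith⟩
  have := habs r hr
  rw [hr0, abs_zero] at this
  linarith

theorem mul_sub_le_abs_sub_of_le_abs_derivWithin {f : ℝ → ℝ} {a b c : ℝ} (hab : a < b)
    (hf : ContDiffOn ℝ 1 f (Icc a b)) (hf' : ∀ t ∈ Icc a b, c ≤ |derivWithin f (Icc a b) t|) :
    c * (b - a) ≤ |f b - f a| := by
  rcases le_or_gt c 0 with hc | hc
  · exact (mul_nonpos_of_nonpos_of_nonneg hc (sub_nonneg.2 hab.le)).trans (abs_nonneg _)
  have hdiff : DifferentiableOn ℝ f (interior (Icc a b)) :=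
    (hf.differentiableOn one_ne_zero).mono interior_subset
  have hderiv : ∀ t ∈ interior (Icc a b), deriv f t = derivWithin f (Icc a b) t :=
    fun t ht => (derivWithin_of_mem_nhds (mem_interior_iff_mem_nhds.1 ht)).symm
  have ha : a ∈ Icc a b := left_mem_Icc.2 hab.le
  have hb : b ∈ Icc a b := right_mem_Icc.2 hab.le
  rcases isPreconnected_Icc.forall_le_or_forall_le_neg_of_le_abs
    (hf.continuousOn_derivWithin (uniqueDiffOn_Icc hab) le_rfl) hc hf' with hpos | hneg
  · have := (convex_Icc a b).mul_sub_le_image_sub_of_le_deriv hf.continuousOn hdiff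
      (fun t ht => hderiv t ht ▸ hpos t (interior_subset ht)) a ha b hb hab.le
    exact this.trans (le_abs_self _)
  · have := (convex_Icc a b).image_sub_le_mul_sub_of_deriv_le hf.continuousOn hdiff
      (fun t ht => hderiv t ht ▸ hneg t (interior_subset ht)) a ha b hb hab.le
    rw [abs_sub_comm]
    linarith [le_abs_self (f a - f b)]

protected theorem ContDiff.iterate {𝕜 X : Type*} [NontriviallyNormedField 𝕜]
    [NormedAddCommGroup X] [NormedSpace 𝕜 X] {f : X → X} {n : WithTop ℕ∞} (hf : ContDiff 𝕜 n f) :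
    ∀ k : ℕ, ContDiff 𝕜 n f^[k]
  | 0 => contDiff_id
  | k + 1 => (hf.iterate k).comp hf

section Cone

variable {d : ℕ} {w : E d} {W : Set (E d)} {α : ℝ} {ℓ : E d →L[ℝ] ℝ}

theorem apply_ne_zero_of_mem_cone (hℓ : ∀ b ∈ W, ℓ b = 0) (hw : ℓ w ≠ 0) {u : E d}
    (hu : u ∈ Cone w W α) (hu0 : u ≠ 0) : ℓ u ≠ 0 := by
  obtain ⟨a, b, hb, rfl, hab⟩ := hu
  have ha : a ≠ 0 := by
    rintro rfl
    simp_all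
  simpa [hℓ b hb] using mul_ne_zero ha hw

variable {F : E d → E d} {K : ℝ}

theorem HasConeSystem.fderiv_mem_cone_and_expands (h : HasConeSystem F w W K α)
    (hℓ : ∀ b ∈ W, ℓ b = 0) (z : E d) {u : E d} (hu : u ∈ Cone w W α) :
    fderiv ℝ F z u ∈ Cone w W α ∧ K * |ℓ u| ≤ |ℓ (fderiv ℝ F z u)| := by
  obtain ⟨a, b, hb, rfl, hab⟩ := hu
  obtain ⟨⟨a', b'⟩, ⟨hb', hdecomp⟩, -⟩ := h.2.2.1 (fderiv ℝ F z (a • w + b))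
  obtain ⟨hcone', hexpand⟩ := h.2.2.2.1 z a b a' b' hb hb' hdecomp hab
  refine ⟨⟨a', b', hb', hdecomp, hcone'.le⟩, ?_⟩
  rw [hdecomp]
  simp only [map_add, map_smul, smul_eq_mul, hℓ b hb, hℓ b' hb', add_zero, abs_mul, ← mul_assoc]
  gcongr

theorem HasConeSystem.fderiv_iterate_mem_cone_and_expands (h : HasConeSystem F w W K α)
    (hF : Differentiable ℝ F) (hℓ : ∀ b ∈ W, ℓ b = 0) (n : ℕ) (z : E d) {u : E d}
    (hu : u ∈ Cone w W α) :
    fderiv ℝ F^[n] z u ∈ Cone w W α ∧ K ^ n * |ℓ u| ≤ |ℓ (fderiv ℝ F^[n] z u)| := by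
  induction n with
  | zero => simpa using hu
  | succ n ih =>
    have hchain : fderiv ℝ F^[n + 1] z u = fderiv ℝ F (F^[n] z) (fderiv ℝ F^[n] z u) := by
      rw [Function.iterate_succ', fderiv_comp z (hF _) (hF.iterate n z)]
      rfl
    obtain ⟨hcone, hexpand⟩ := h.fderiv_mem_cone_and_expands hℓ (F^[n] z) ih.1
    refine ⟨hchain ▸ hcone, ?_⟩
    rw [hchain, pow_succ', mul_assoc]
    exact (mul_le_mul_of_nonneg_left ih.2 (zero_le_one.trans h.1.le)).trans hexpand

theorem HasConeSystem.pow_mul_mul_sub_le_abs_sub_iterate (h : HasConeSystem F w W K α)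
    (hF : ContDiff ℝ 1 F) (hℓ : ∀ b ∈ W, ℓ b = 0) {γ : ℝ → E d} {a b δ : ℝ} (hab : a < b)
    (hγ : ContDiffOn ℝ 1 γ (Icc a b))
    (hγ' : ∀ t ∈ Icc a b, derivWithin γ (Icc a b) t ∈ Cone w W α ∧
      δ ≤ |ℓ (derivWithin γ (Icc a b) t)|) (n : ℕ) :
    K ^ n * δ * (b - a) ≤ |ℓ (F^[n] (γ b)) - ℓ (F^[n] (γ a))| := by
  have hFn := hF.iterate n
  refine mul_sub_le_abs_sub_of_le_abs_derivWithin hab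
    ((ℓ.contDiff.comp hFn).comp_contDiffOn hγ) fun t ht => ?_
  have hchain : derivWithin ((ℓ ∘ F^[n]) ∘ γ) (Icc a b) t
      = ℓ (fderiv ℝ F^[n] (γ t) (derivWithin γ (Icc a b) t)) :=
    ((ℓ.hasFDerivAt.comp (γ t) (hFn.differentiable one_ne_zero _).hasFDerivAt).comp_hasDerivWithinAt
      t (hγ.differentiableOn one_ne_zero t ht).hasDerivWithinAt).derivWithin
      (uniqueDiffOn_Icc hab t ht)
  obtain ⟨-, hexpand⟩ := h.fderiv_iterate_mem_cone_and_expands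
    (hF.differentiable one_ne_zero) hℓ n (γ t) (hγ' t ht).1
  rw [hchain]
  exact (mul_le_mul_of_nonneg_left (hγ' t ht).2 (pow_nonneg (zero_le_one.trans h.1.le) n)).trans
    hexpand

end Cone

theorem no_horizontal_curve_in_fiber_general
    (d : ℕ)
    (M : Matrix (Fin d) (Fin d) ℤ) (G : E d → E d) (Fh : E d → E d)
    (hFh : ∀ z, Fh z = mulVecR M z + G z)
    (hGC1 : ContDiff ℝ 1 G)
    (hGper : ∀ (z : E d) (ν : Fin d → ℤ), G (z + intCast ν) = G z)
    (m : ℤ) (hm : 1 < |m|)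
    (v : Fin d → ℤ)
    (hvleft : ∀ j, ∑ i, v i * M i j = m * v j)
    (k : ℤ)
    -- Φ̂(z) = k⁻¹ lim_{n→∞} m⁻ⁿ v·F̂ⁿ(z), which exists and is continuous
    (Φh : E d → ℝ)
    (hΦlim : ∀ z, Filter.Tendsto
      (fun n : ℕ => ((m : ℝ) ^ n)⁻¹ * ∑ i, (v i : ℝ) * (Fh^[n] z) i)
      Filter.atTop (nhds ((k : ℝ) * Φh z)))
    -- the (K,α)-expanding cone system w.r.t. a unit vector w ∉ W, W = {u : v·u = 0}
    (w : E d)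
    (hwW : w ∉ {u : E d | ∑ i, (v i : ℝ) * u i = 0})
    (K α : ℝ)
    (hcone : HasConeSystem Fh w {u : E d | ∑ i, (v i : ℝ) * u i = 0} K α)
    (z₁ z₂ : E d) (hfib : Φh z₁ = Φh z₂) :
    ¬ ∃ γ : ℝ → E d, ContDiffOn ℝ 1 γ (Set.Icc 0 1) ∧ γ 0 = z₁ ∧ γ 1 = z₂ ∧
        ∀ t ∈ Set.Icc (0:ℝ) 1,
          derivWithin γ (Set.Icc 0 1) t ≠ 0 ∧
          derivWithin γ (Set.Icc 0 1) t ∈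
            Cone w {u : E d | ∑ i, (v i : ℝ) * u i = 0} α := by
  rintro ⟨γ, hγ, rfl, rfl, hγ'⟩
  set ℓ := dotCLM v
  have hℓW : ∀ b ∈ {u : E d | ∑ i, (v i : ℝ) * u i = 0}, ℓ b = 0 := fun b hb => by
    simpa [ℓ] using hb
  have hF : ContDiff ℝ 1 Fh := by
    simpa only [← funext hFh] using (contDiff_mulVecR M).add hGC1
  obtain ⟨δ, hδ, hδle⟩ := isCompact_Icc.exists_forall_le'
    (ℓ.continuous.comp_continuousOn
      (hγ.continuousOn_derivWithin (uniqueDiffOn_Icc one_pos) le_rfl)).abs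
    fun t ht => abs_pos.2 <|
      apply_ne_zero_of_mem_cone hℓW (by simpa [ℓ] using hwW) (hγ' t ht).2 (hγ' t ht).1
  obtain ⟨C, hC⟩ := exists_forall_norm_le_of_intCast_periodic (ℓ.continuous.comp hGC1.continuous)
    fun z ν => by simp only [Function.comp_apply, hGper]
  have hstep : ∀ z, |ℓ (Fh z) - m * ℓ z| ≤ C := fun z => by
    rw [hFh, map_add, dotCLM_mulVecR hvleft, add_sub_cancel_left]
    exact hC z
  obtain ⟨n, hn⟩ := pow_unbounded_of_one_lt
    (2 * (C * |(m : ℝ)|⁻¹ / (1 - |(m : ℝ)|⁻¹)) / δ) hcone.1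
  have hupper := abs_sub_iterate_le_of_eq (by exact_mod_cast hm) hstep
    (by simpa [ℓ] using hΦlim) (congrArg ((k : ℝ) * ·) hfib) n
  have hlower := hcone.pow_mul_mul_sub_le_abs_sub_iterate hF hℓW one_pos hγ
    (fun t ht => ⟨(hγ' t ht).2, hδle t ht⟩) n
  rw [div_lt_iff₀ hδ] at hn
  linarith

/-- **Claim A.** Two distinct points in the same fiber of Φ̂ cannot be joined
by a C¹ horizontal curve (a curve with nonvanishing derivative lying in the
cone C_α). -/
theorem no_horizontal_curve_in_fiber
    (d : ℕ)
    (M : Matrix (Fin d) (Fin d) ℤ) (G : E d → E d) (Fh : E d → E d)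
    (hFh : ∀ z, Fh z = mulVecR M z + G z)
    (hGC1 : ContDiff ℝ 1 G)
    (hGper : ∀ (z : E d) (ν : Fin d → ℤ), G (z + intCast ν) = G z)
    (m : ℤ) (hm : 1 < |m|)
    (v : Fin d → ℤ) (hv : v ≠ 0)
    (hvleft : ∀ j, ∑ i, v i * M i j = m * v j)
    -- k = min{|v·x| : x ∈ ℤ^d, v·x ≠ 0}
    (k : ℤ)
    (hk : IsLeast {n : ℤ | ∃ x : Fin d → ℤ,
      n = |∑ i, v i * x i| ∧ (∑ i, v i * x i) ≠ 0} k)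
    -- Φ̂(z) = k⁻¹ lim_{n→∞} m⁻ⁿ v·F̂ⁿ(z), which exists and is continuous
    (Φh : E d → ℝ)
    (hΦlim : ∀ z, Filter.Tendsto
      (fun n : ℕ => ((m : ℝ) ^ n)⁻¹ * ∑ i, (v i : ℝ) * (Fh^[n] z) i)
      Filter.atTop (nhds ((k : ℝ) * Φh z)))
    (hΦcont : Continuous Φh)
    -- the (K,α)-expanding cone system w.r.t. a unit vector w ∉ W, W = {u : v·u = 0}
    (w : E d) (hw : ‖w‖ = 1)
    (hwW : w ∉ {u : E d | ∑ i, (v i : ℝ) * u i = 0})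
    (K α : ℝ)
    (hcone : HasConeSystem Fh w {u : E d | ∑ i, (v i : ℝ) * u i = 0} K α)
    (z₁ z₂ : E d) (hne : z₁ ≠ z₂) (hfib : Φh z₁ = Φh z₂) :
    ¬ ∃ γ : ℝ → E d, ContDiffOn ℝ 1 γ (Set.Icc 0 1) ∧ γ 0 = z₁ ∧ γ 1 = z₂ ∧
        ∀ t ∈ Set.Icc (0:ℝ) 1,
          derivWithin γ (Set.Icc 0 1) t ≠ 0 ∧
          derivWithin γ (Set.Icc 0 1) t ∈
            Cone w {u : E d | ∑ i, (v i : ℝ) * u i = 0} α :=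
  no_horizontal_curve_in_fiber_general d M G Fh hFh hGC1 hGper m hm v hvleft k Φh hΦlim w hwW K α
    hcone z₁ z₂ hfib
end
end

section
/- (Empty parallelepipeds are unimodular) Let w₁, …, w_d ∈ ℤ^d be linearly independent integer vectors and let P := {t₁w₁ + ⋯ + t_d w_d : tᵢ ∈ [0,1] for all i} be the closed parallelepiped they span. If the only lattice points of ℤ^d contained in P are its vertices {Σ_{i∈S} wᵢ : S ⊆ {1,…,d}}, then |det(w₁, …, w_d)| = 1. -/
/-!
Since the wᵢ span ℝ^d, every x ∈ ℤ^d is x = Σ tᵢ wᵢ with real tᵢ. Subtracting the lattice vector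
Σ ⌊tᵢ⌋ wᵢ leaves Σ fract(tᵢ) wᵢ, a lattice point of P and hence a vertex Σ_{i∈S} wᵢ. So the wᵢ
generate ℤ^d as a group: the integer matrix with rows wᵢ is invertible over ℤ, and its
determinant is a unit of ℤ.
-/

open Matrix

section
variable {ι κ : Type*} [Fintype ι]

lemma intCast_sub_sum_floor_smul (w : ι → κ → ℤ) (x : κ → ℤ) (t : ι → ℝ)
    (hx : (fun j => (x j : ℝ)) = ∑ i, t i • fun j => (w i j : ℝ)) :
    (fun j => ((x - ∑ i, ⌊t i⌋ • w i) j : ℝ)) = ∑ i, Int.fract (t i) • fun j => (w i j : ℝ) := by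
  funext j
  have hxj := congrFun hx j
  simp only [Finset.sum_apply, Pi.smul_apply, smul_eq_mul, Pi.sub_apply] at hxj ⊢
  push_cast
  simp only [Int.fract, sub_mul, Finset.sum_sub_distrib, hxj]

lemma exists_eq_sum_zsmul_of_parallelepiped (w : ι → κ → ℤ)
    (hempty : ∀ x : κ → ℤ,
      (∃ t : ι → ℝ, (∀ i, t i ∈ Set.Icc (0 : ℝ) 1) ∧
        (fun j => (x j : ℝ)) = ∑ i, t i • fun j => (w i j : ℝ)) →
      ∃ S : Finset ι, x = ∑ i ∈ S, w i)
    (x : κ → ℤ) (t : ι → ℝ) (hx : (fun j => (x j : ℝ)) = ∑ i, t i • fun j => (w i j : ℝ)) :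
    ∃ c : ι → ℤ, x = ∑ i, c i • w i := by
  classical
  obtain ⟨S, hS⟩ := hempty _ ⟨fun i => Int.fract (t i),
    fun i => ⟨Int.fract_nonneg _, (Int.fract_lt_one _).le⟩, intCast_sub_sum_floor_smul w x t hx⟩
  refine ⟨fun i => ⌊t i⌋ + if i ∈ S then 1 else 0, ?_⟩
  calc x = ∑ i, ⌊t i⌋ • w i + ∑ i ∈ S, w i := by rw [← hS]; abel
    _ = ∑ i, (⌊t i⌋ + if i ∈ S then 1 else 0) • w i := by
      simp only [add_smul, Finset.sum_add_distrib, ite_smul, one_smul, zero_smul,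
        Finset.sum_ite_mem, Finset.univ_inter]

end

/-- **Empty parallelepipeds are unimodular.** If the closed parallelepiped
spanned by linearly independent integer vectors w₁, …, w_d contains no lattice
points other than its vertices Σ_{i∈S} wᵢ, then |det(w₁, …, w_d)| = 1. -/
theorem empty_parallelepiped_unimodular
    (d : ℕ) (w : Fin d → Fin d → ℤ)
    (hind : LinearIndependent ℝ (fun i : Fin d => fun j : Fin d => (w i j : ℝ)))
    (hempty : ∀ x : Fin d → ℤ,
      (∃ t : Fin d → ℝ, (∀ i, t i ∈ Set.Icc (0 : ℝ) 1) ∧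
        (fun j => (x j : ℝ)) = ∑ i, t i • fun j => (w i j : ℝ)) →
      ∃ S : Finset (Fin d), x = ∑ i ∈ S, w i) :
    (Matrix.of fun i j => w j i).det = 1 ∨ (Matrix.of fun i j => w j i).det = -1 := by
  have hspan := hind.span_eq_top_of_card_eq_finrank' (by simp)
  have hsurj : Function.Surjective fun c => c ᵥ* Matrix.of w := by
    intro x
    obtain ⟨t, ht⟩ := (Submodule.mem_span_range_iff_exists_fun ℝ).mp
      (hspan ▸ Submodule.mem_top : (fun j => (x j : ℝ)) ∈ _)
    obtain ⟨c, hc⟩ := exists_eq_sum_zsmul_of_parallelepiped w hempty x t ht.symm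
    exact ⟨c, (vecMul_eq_sum c (of w)).trans hc.symm⟩
  rw [← Int.isUnit_iff, show (Matrix.of fun i j => w j i) = (Matrix.of w)ᵀ from rfl, det_transpose]
  exact (isUnit_iff_isUnit_det _).mp (vecMul_surjective_iff_isUnit.mp hsurj)
end
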